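/- arXiv:2103.12796 — 7 statements merged into one kernel-verified Lean document; each statement's English description precedes it below -/
import Mathlib

section
/- Let λ ∈ ℝ, let I ⊆ ℝ be an open interval, and let b : I → ℝ be a twice differentiable function with b(s) > 0 and b'(s) ≠ 2λ for all s ∈ I, satisfying the Schouten soliton ODE b(s)·b''(s) − (b'(s))² + 6λ·b'(s) − 8λ² = 0 on I. Then there exists a constant σ₀ ∈ ℝ such that (b'(s) − 4λ)² = σ₀ · b(s) · (b'(s) − 2λ) for all s ∈ I. -/
/-!
Along a solution of the Schouten soliton ODE, `b b'' = (b' - 2λ)(b' - 4λ)`, and with this the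
quotient `(b' - 4λ)² / (b (b' - 2λ))` has vanishing derivative wherever its denominator is
nonzero. On an interval it is therefore a constant `σ₀`.
-/

noncomputable def schoutenFirstIntegral (lam : ℝ) (b b' : ℝ → ℝ) (s : ℝ) : ℝ :=
  (b' s - 4 * lam) ^ 2 / (b s * (b' s - 2 * lam))

theorem hasDerivAt_schoutenFirstIntegral {lam s : ℝ} {b b' b'' : ℝ → ℝ}
    (hb : HasDerivAt b (b' s) s) (hb' : HasDerivAt b' (b'' s) s)
    (hden : b s * (b' s - 2 * lam) ≠ 0)
    (hode : b s * b'' s - (b' s) ^ 2 + 6 * lam * b' s - 8 * lam ^ 2 = 0) :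
    HasDerivAt (schoutenFirstIntegral lam b b') 0 s := by
  have hnum : HasDerivAt (fun t => (b' t - 4 * lam) ^ 2) (2 * (b' s - 4 * lam) * b'' s) s :=
    ((hb'.sub_const (4 * lam)).fun_pow 2).congr_deriv (by norm_num)
  have hquot := hnum.fun_div (hb.fun_mul (hb'.sub_const (2 * lam))) hden
  have hode' : b s * b'' s = (b' s - 2 * lam) * (b' s - 4 * lam) := by linear_combination hode
  refine hquot.congr_deriv ?_
  rw [div_eq_zero_iff]
  left
  linear_combination (2 * (b' s - 4 * lam) * (b' s - 2 * lam) - (b' s - 4 * lam) ^ 2) * hode'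

/-- (First integral of the Schouten soliton ODE, Lemma 3.2 of the paper.)
If `b` is twice differentiable on an open interval `I`, positive, with `b' ≠ 2λ` on `I`, and
satisfies `b·b'' − (b')² + 6λ·b' − 8λ² = 0` on `I`, then there is a constant `σ₀` with
`(b' − 4λ)² = σ₀ · b · (b' − 2λ)` on `I`. -/
theorem stmt_0 (lam : ℝ) (I : Set ℝ) (hIopen : IsOpen I) (hIinterval : I.OrdConnected)
    (b b' b'' : ℝ → ℝ)
    (hb : ∀ s ∈ I, HasDerivAt b (b' s) s)
    (hb' : ∀ s ∈ I, HasDerivAt b' (b'' s) s)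
    (hpos : ∀ s ∈ I, 0 < b s)
    (hne : ∀ s ∈ I, b' s ≠ 2 * lam)
    (hode : ∀ s ∈ I, b s * b'' s - (b' s) ^ 2 + 6 * lam * b' s - 8 * lam ^ 2 = 0) :
    ∃ σ₀ : ℝ, ∀ s ∈ I, (b' s - 4 * lam) ^ 2 = σ₀ * (b s * (b' s - 2 * lam)) := by
  have hden : ∀ s ∈ I, b s * (b' s - 2 * lam) ≠ 0 := fun s hs =>
    mul_ne_zero (hpos s hs).ne' (sub_ne_zero.mpr (hne s hs))
  have hderiv : ∀ s ∈ I, HasDerivAt (schoutenFirstIntegral lam b b') 0 s := fun s hs =>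
    hasDerivAt_schoutenFirstIntegral (hb s hs) (hb' s hs) (hden s hs) (hode s hs)
  obtain ⟨σ₀, hσ₀⟩ := hIopen.exists_is_const_of_deriv_eq_zero hIinterval.isPreconnected
    (fun s hs => (hderiv s hs).differentiableAt.differentiableWithinAt)
    (fun s hs => (hderiv s hs).deriv)
  refine ⟨σ₀, fun s hs => ?_⟩
  rw [← hσ₀ s hs, schoutenFirstIntegral, div_mul_cancel₀ _ (hden s hs)]
end

section
/- Let λ ∈ ℝ, let I ⊆ ℝ be an open interval, and let b : I → ℝ be a twice differentiable function with b(s) ≠ 0 and b'(s) ≠ 2λ for all s ∈ I. Then the function φ(s) = (b'(s) − 4λ)² / (b(s)·(b'(s) − 2λ)) is differentiable on I, and for all s ∈ I its derivative equals φ'(s) = [b'(s)·(b'(s) − 4λ) / (b(s)²·(b'(s) − 2λ)²)] · (b(s)·b''(s) − (b'(s) − 2λ)·(b'(s) − 4λ)). In particular, φ is constant on I whenever b satisfies b(s)·b''(s) − (b'(s))² + 6λ·b'(s) − 8λ² = 0 on I. -/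
/-! By the quotient rule, the numerator of `φ'` factors as
`(b' − 4λ) · b' · (b b'' − (b' − 2λ)(b' − 4λ))`, and the last factor is the left-hand side of the
Schouten soliton ODE. On a solution `φ'` therefore vanishes, so `φ` is constant on the connected
open set `I`. -/

noncomputable def schoutenQuotient (lam : ℝ) (b b' : ℝ → ℝ) (t : ℝ) : ℝ :=
  (b' t - 4 * lam) ^ 2 / (b t * (b' t - 2 * lam))

theorem schouten_ode_eq (lam x y z : ℝ) :
    x * z - y ^ 2 + 6 * lam * y - 8 * lam ^ 2 = x * z - (y - 2 * lam) * (y - 4 * lam) := by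
  ring

theorem hasDerivAt_schoutenQuotient {lam s b'' : ℝ} {b b' : ℝ → ℝ}
    (hb : HasDerivAt b (b' s) s) (hb' : HasDerivAt b' b'' s)
    (hbs : b s ≠ 0) (hb's : b' s ≠ 2 * lam) :
    HasDerivAt (schoutenQuotient lam b b')
      (b' s * (b' s - 4 * lam) / (b s ^ 2 * (b' s - 2 * lam) ^ 2) *
        (b s * b'' - (b' s - 2 * lam) * (b' s - 4 * lam))) s := by
  have hb's' : b' s - 2 * lam ≠ 0 := sub_ne_zero.mpr hb's
  have hnum : HasDerivAt (fun t => (b' t - 4 * lam) ^ 2) (2 * (b' s - 4 * lam) * b'') s :=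
    ((hb'.sub_const (4 * lam)).pow 2).congr_deriv (by ring)
  have hden : HasDerivAt (fun t => b t * (b' t - 2 * lam))
      (b' s * (b' s - 2 * lam) + b s * b'') s :=
    hb.mul (hb'.sub_const (2 * lam))
  refine (hnum.div hden (mul_ne_zero hbs hb's')).congr_deriv ?_
  field_simp
  ring

theorem exists_schoutenQuotient_eq_const {lam : ℝ} {I : Set ℝ} (hIopen : IsOpen I)
    (hIconn : IsPreconnected I) {b b' b'' : ℝ → ℝ}
    (hb : ∀ s ∈ I, HasDerivAt b (b' s) s) (hb' : ∀ s ∈ I, HasDerivAt b' (b'' s) s)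
    (hbne : ∀ s ∈ I, b s ≠ 0) (hne : ∀ s ∈ I, b' s ≠ 2 * lam)
    (hode : ∀ s ∈ I, b s * b'' s - (b' s - 2 * lam) * (b' s - 4 * lam) = 0) :
    ∃ c, ∀ s ∈ I, schoutenQuotient lam b b' s = c := by
  have hzero : ∀ s ∈ I, HasDerivAt (schoutenQuotient lam b b') 0 s := fun s hs => by
    simpa [hode s hs] using
      hasDerivAt_schoutenQuotient (hb s hs) (hb' s hs) (hbne s hs) (hne s hs)
  exact hIopen.exists_is_const_of_deriv_eq_zero hIconn
    (fun s hs => (hzero s hs).differentiableAt.differentiableWithinAt)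
    (fun s hs => (hzero s hs).deriv)

/-- The quotient `φ = (b' − 4λ)² / (b·(b' − 2λ))` is differentiable with
derivative `φ' = [b'·(b' − 4λ)/(b²·(b' − 2λ)²)]·(b·b'' − (b' − 2λ)(b' − 4λ))`; in particular
`φ` is constant on `I` whenever `b` satisfies the Schouten soliton ODE. -/
theorem stmt_1 (lam : ℝ) (I : Set ℝ) (hIopen : IsOpen I) (hIinterval : I.OrdConnected)
    (b b' b'' : ℝ → ℝ)
    (hb : ∀ s ∈ I, HasDerivAt b (b' s) s)
    (hb' : ∀ s ∈ I, HasDerivAt b' (b'' s) s)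
    (hbne : ∀ s ∈ I, b s ≠ 0)
    (hne : ∀ s ∈ I, b' s ≠ 2 * lam) :
    (∀ s ∈ I, HasDerivAt (fun t => (b' t - 4 * lam) ^ 2 / (b t * (b' t - 2 * lam)))
      (b' s * (b' s - 4 * lam) / ((b s) ^ 2 * (b' s - 2 * lam) ^ 2) *
        (b s * b'' s - (b' s - 2 * lam) * (b' s - 4 * lam))) s) ∧
    ((∀ s ∈ I, b s * b'' s - (b' s) ^ 2 + 6 * lam * b' s - 8 * lam ^ 2 = 0) →
      ∃ c : ℝ, ∀ s ∈ I,
        (b' s - 4 * lam) ^ 2 / (b s * (b' s - 2 * lam)) = c) := by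
  refine ⟨fun s hs => hasDerivAt_schoutenQuotient (hb s hs) (hb' s hs) (hbne s hs) (hne s hs),
    fun hode => ?_⟩
  exact exists_schoutenQuotient_eq_const hIopen hIinterval.isPreconnected hb hb' hbne hne
    fun s hs => schouten_ode_eq lam (b s) (b' s) (b'' s) ▸ hode s hs
end

section
/- Let λ ∈ ℝ, let I ⊆ ℝ be an open interval, and let b : I → ℝ be a twice differentiable function with b(s) > 0 for all s ∈ I, satisfying the Schouten soliton ODE b(s)·b''(s) − (b'(s))² + 6λ·b'(s) − 8λ² = 0 on I. Then the function u : I → ℝ defined by u(s) = b(s)·(b'(s) − 2λ) is differentiable on I and satisfies u'(s) = 2·u(s)² / b(s)² for all s ∈ I. -/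
theorem schouten_ode_derivative_identity {lam b b' b'' : ℝ}
    (hode : b * b'' - b' ^ 2 + 6 * lam * b' - 8 * lam ^ 2 = 0) :
    b' * (b' - 2 * lam) + b * b'' = 2 * (b' - 2 * lam) ^ 2 := by
  linear_combination hode

theorem hasDerivAt_mul_sub_of_schouten_ode {lam s : ℝ} {b b' : ℝ → ℝ} {b'' : ℝ}
    (hb : HasDerivAt b (b' s) s) (hb' : HasDerivAt b' b'' s) (hbs : b s ≠ 0)
    (hode : b s * b'' - (b' s) ^ 2 + 6 * lam * b' s - 8 * lam ^ 2 = 0) :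
    HasDerivAt (fun t => b t * (b' t - 2 * lam))
      (2 * (b s * (b' s - 2 * lam)) ^ 2 / (b s) ^ 2) s := by
  refine (hb.mul (hb'.sub_const (2 * lam))).congr_deriv ?_
  rw [schouten_ode_derivative_identity hode]
  field_simp

theorem stmt_2_general (lam : ℝ) (I : Set ℝ)
    (b b' b'' : ℝ → ℝ)
    (hb : ∀ s ∈ I, HasDerivAt b (b' s) s)
    (hb' : ∀ s ∈ I, HasDerivAt b' (b'' s) s)
    (hpos : ∀ s ∈ I, 0 < b s)
    (hode : ∀ s ∈ I, b s * b'' s - (b' s) ^ 2 + 6 * lam * b' s - 8 * lam ^ 2 = 0) :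
    ∀ s ∈ I, HasDerivAt (fun t => b t * (b' t - 2 * lam))
      (2 * (b s * (b' s - 2 * lam)) ^ 2 / (b s) ^ 2) s := fun s hs =>
  hasDerivAt_mul_sub_of_schouten_ode (hb s hs) (hb' s hs) (hpos s hs).ne' (hode s hs)

/-- If `b > 0` satisfies the Schouten soliton ODE on `I`, then
`u = b·(b' − 2λ)` satisfies `u' = 2u²/b²` on `I`. -/
theorem stmt_2 (lam : ℝ) (I : Set ℝ) (hIopen : IsOpen I) (hIinterval : I.OrdConnected)
    (b b' b'' : ℝ → ℝ)
    (hb : ∀ s ∈ I, HasDerivAt b (b' s) s)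
    (hb' : ∀ s ∈ I, HasDerivAt b' (b'' s) s)
    (hpos : ∀ s ∈ I, 0 < b s)
    (hode : ∀ s ∈ I, b s * b'' s - (b' s) ^ 2 + 6 * lam * b' s - 8 * lam ^ 2 = 0) :
    ∀ s ∈ I, HasDerivAt (fun t => b t * (b' t - 2 * lam))
      (2 * (b s * (b' s - 2 * lam)) ^ 2 / (b s) ^ 2) s :=
  stmt_2_general lam I b b' b'' hb hb' hpos hode
end

section
/- Let λ ∈ ℝ, let I ⊆ ℝ be an open interval, and let b : I → ℝ be a twice continuously differentiable function with b(s) > 0 for all s ∈ I, satisfying the Schouten soliton ODE b(s)·b''(s) − (b'(s))² + 6λ·b'(s) − 8λ² = 0 on I. If there exists s₀ ∈ I with b'(s₀) = 2λ, then b'(s) = 2λ for all s ∈ I. -/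
/-!
Writing `u = b' - 2λ`, the Schouten soliton ODE factors as `b·b'' = (b' - 2λ)(b' - 4λ)`, so
`u' = g·u` with `g = (b' - 4λ)/b` continuous, because `b > 0`. This linear ODE is Lipschitz in `u`
on every compact subinterval, hence uniqueness of solutions forces `u ≡ 0` once `u` vanishes at a
single point.
-/

open Set NNReal

section LinearODE

variable {E : Type*} [NormedAddCommGroup E] [NormedSpace ℝ E] {g : ℝ → ℝ} {u : ℝ → E}

lemma exists_forall_lipschitzWith_smul_of_continuousOn {a c : ℝ} (hg : ContinuousOn g (Icc a c)) :
    ∃ K : ℝ≥0, ∀ t ∈ Icc a c, LipschitzWith K (g t • · : E → E) := by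
  obtain ⟨C, hC⟩ := isCompact_Icc.exists_bound_of_continuousOn hg
  refine ⟨C.toNNReal, fun t ht => (lipschitzWith_smul (g t)).weaken ?_⟩
  rw [← NNReal.coe_le_coe, coe_nnnorm]
  exact (hC t ht).trans (Real.le_coe_toNNReal C)

lemma eqOn_Icc_zero_of_hasDerivAt_eq_smul {a c : ℝ} (hg : ContinuousOn g (Icc a c))
    (hu : ∀ t ∈ Icc a c, HasDerivAt u (g t • u t) t) (h0 : u a = 0 ∨ u c = 0) :
    EqOn u 0 (Icc a c) := by
  obtain ⟨K, hK⟩ := exists_forall_lipschitzWith_smul_of_continuousOn (E := E) hg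
  have hcont : ContinuousOn u (Icc a c) := HasDerivAt.continuousOn hu
  have hzero : ∀ t, HasDerivAt (0 : ℝ → E) (g t • (0 : ℝ → E) t) t := fun t => by simp
  rcases h0 with ha | hc
  · exact ODE_solution_unique_of_mem_Icc_right (s := fun _ => univ)
      (fun t ht => (hK t (Ico_subset_Icc_self ht)).lipschitzOnWith) hcont
      (fun t ht => (hu t (Ico_subset_Icc_self ht)).hasDerivWithinAt) (fun _ _ => trivial)
      continuousOn_const (fun t _ => (hzero t).hasDerivWithinAt) (fun _ _ => trivial) ha
  · exact ODE_solution_unique_of_mem_Icc_left (s := fun _ => univ)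
      (fun t ht => (hK t (Ioc_subset_Icc_self ht)).lipschitzOnWith) hcont
      (fun t ht => (hu t (Ioc_subset_Icc_self ht)).hasDerivWithinAt) (fun _ _ => trivial)
      continuousOn_const (fun t _ => (hzero t).hasDerivWithinAt) (fun _ _ => trivial) hc

lemma eqOn_zero_of_hasDerivAt_eq_smul {s : Set ℝ} (hs : s.OrdConnected) (hg : ContinuousOn g s)
    (hu : ∀ t ∈ s, HasDerivAt u (g t • u t) t) {t₀ : ℝ} (ht₀ : t₀ ∈ s) (h0 : u t₀ = 0) :
    EqOn u 0 s := by
  intro t ht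
  rcases le_total t₀ t with h | h
  · exact eqOn_Icc_zero_of_hasDerivAt_eq_smul (hg.mono (hs.out ht₀ ht))
      (fun τ hτ => hu τ (hs.out ht₀ ht hτ)) (.inl h0) ⟨h, le_rfl⟩
  · exact eqOn_Icc_zero_of_hasDerivAt_eq_smul (hg.mono (hs.out ht ht₀))
      (fun τ hτ => hu τ (hs.out ht ht₀ hτ)) (.inr h0) ⟨le_rfl, h⟩

end LinearODE

lemma schouten_second_deriv_eq {lam b b' b'' : ℝ} (hb : b ≠ 0)
    (hode : b * b'' - b' ^ 2 + 6 * lam * b' - 8 * lam ^ 2 = 0) :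
    b'' = (b' - 4 * lam) / b * (b' - 2 * lam) := by
  field_simp
  linear_combination hode

theorem stmt_4_general (lam : ℝ) (I : Set ℝ) (hIinterval : I.OrdConnected)
    (b b' b'' : ℝ → ℝ)
    (hb : ∀ s ∈ I, HasDerivAt b (b' s) s)
    (hb' : ∀ s ∈ I, HasDerivAt b' (b'' s) s)
    (hpos : ∀ s ∈ I, 0 < b s)
    (hode : ∀ s ∈ I, b s * b'' s - (b' s) ^ 2 + 6 * lam * b' s - 8 * lam ^ 2 = 0)
    (s₀ : ℝ) (hs₀ : s₀ ∈ I) (h2 : b' s₀ = 2 * lam) :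
    ∀ s ∈ I, b' s = 2 * lam := by
  have hg : ContinuousOn (fun s => (b' s - 4 * lam) / b s) I :=
    ((HasDerivAt.continuousOn hb').sub continuousOn_const).div (HasDerivAt.continuousOn hb)
      fun s hs => (hpos s hs).ne'
  have hu : ∀ s ∈ I, HasDerivAt (fun s => b' s - 2 * lam)
      (((b' s - 4 * lam) / b s) • (b' s - 2 * lam)) s := fun s hs => by
    rw [smul_eq_mul, ← schouten_second_deriv_eq (hpos s hs).ne' (hode s hs)]
    exact (hb' s hs).sub_const _
  intro s hs
  exact sub_eq_zero.mp <|
    eqOn_zero_of_hasDerivAt_eq_smul hIinterval hg hu hs₀ (sub_eq_zero.mpr h2) hs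

/-- For a positive C² solution of the Schouten soliton ODE on an open
interval, if `b' = 2λ` at one point, then `b' ≡ 2λ` on the whole interval. -/
theorem stmt_4 (lam : ℝ) (I : Set ℝ) (hIopen : IsOpen I) (hIinterval : I.OrdConnected)
    (b b' b'' : ℝ → ℝ)
    (hb : ∀ s ∈ I, HasDerivAt b (b' s) s)
    (hb' : ∀ s ∈ I, HasDerivAt b' (b'' s) s)
    (hb'' : ContinuousOn b'' I)
    (hpos : ∀ s ∈ I, 0 < b s)
    (hode : ∀ s ∈ I, b s * b'' s - (b' s) ^ 2 + 6 * lam * b' s - 8 * lam ^ 2 = 0)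
    (s₀ : ℝ) (hs₀ : s₀ ∈ I) (h2 : b' s₀ = 2 * lam) :
    ∀ s ∈ I, b' s = 2 * lam :=
  stmt_4_general lam I hIinterval b b' b'' hb hb' hpos hode s₀ hs₀ h2
end

section
/- Let λ ∈ ℝ, let I ⊆ ℝ be an open interval, and let b : I → ℝ be a twice continuously differentiable function with b(s) > 0 for all s ∈ I, satisfying the Schouten soliton ODE b(s)·b''(s) − (b'(s))² + 6λ·b'(s) − 8λ² = 0 on I. If there exists s₀ ∈ I with b'(s₀) = 4λ, then b'(s) = 4λ for all s ∈ I. -/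
/-!
Put `u = b' - 4λ`. Since `b'² - 6λb' + 8λ² = (b' - 2λ)(b' - 4λ)`, the Schouten soliton ODE says
that `u` solves the linear equation `u' = g u` with the continuous coefficient
`g = (b' - 2λ) / b`. A linear equation is Lipschitz in the unknown, so by uniqueness of solutions
(Grönwall) the solution vanishing at `s₀` is `u ≡ 0`.
-/

open Set Filter Topology

section LinearODE

variable {E : Type*} [NormedAddCommGroup E] [NormedSpace ℝ E] {u : ℝ → E} {g : ℝ → ℝ}

theorem eqOn_zero_of_hasDerivAt_smul_self_Icc {a c t₀ : ℝ} (hg : ContinuousOn g (Icc a c))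
    (hu : ContinuousOn u (Icc a c)) (hu' : ∀ t ∈ Ioo a c, HasDerivAt u (g t • u t) t)
    (ht₀ : t₀ ∈ Ioo a c) (hu₀ : u t₀ = 0) : EqOn u 0 (Icc a c) := by
  obtain ⟨C, hC⟩ := isCompact_Icc.exists_bound_of_continuousOn hg
  have hlip : ∀ t ∈ Ioo a c, LipschitzOnWith C.toNNReal (g t • · : E → E) univ := fun t ht =>
    ((lipschitzWith_smul (g t)).weaken <| by
      rw [← NNReal.coe_le_coe, coe_nnnorm, Real.coe_toNNReal']
      exact (hC t (Ioo_subset_Icc_self ht)).trans (le_max_left _ _)).lipschitzOnWith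
  exact ODE_solution_unique_of_mem_Icc hlip ht₀ hu hu' (fun _ _ => mem_univ _)
    continuousOn_const (fun t _ => by simp) (fun _ _ => mem_univ _) hu₀

theorem IsOpen.exists_Icc_subset_of_ordConnected {I : Set ℝ} (hI : IsOpen I) (hI' : I.OrdConnected) {x y : ℝ}
    (hx : x ∈ I) (hy : y ∈ I) : ∃ a c, Icc a c ⊆ I ∧ x ∈ Ioo a c ∧ y ∈ Ioo a c := by
  obtain ⟨a, haI, ha⟩ : ∃ a, a ∈ I ∧ a < min x y :=
    (Eventually.and (mem_nhdsWithin_of_mem_nhds (hI.mem_nhds (min_rec' I hx hy)))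
      (self_mem_nhdsWithin : Iio (min x y) ∈ 𝓝[<] min x y)).exists
  obtain ⟨c, hcI, hc⟩ : ∃ c, c ∈ I ∧ max x y < c :=
    (Eventually.and (mem_nhdsWithin_of_mem_nhds (hI.mem_nhds (max_rec' I hx hy)))
      (self_mem_nhdsWithin : Ioi (max x y) ∈ 𝓝[>] max x y)).exists
  exact ⟨a, c, hI'.out haI hcI, ⟨ha.trans_le (min_le_left x y), (le_max_left x y).trans_lt hc⟩,
    ⟨ha.trans_le (min_le_right x y), (le_max_right x y).trans_lt hc⟩⟩

theorem eqOn_zero_of_hasDerivAt_smul_self {I : Set ℝ} (hI : IsOpen I) (hI' : I.OrdConnected)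
    (hg : ContinuousOn g I) (hu' : ∀ t ∈ I, HasDerivAt u (g t • u t) t) {t₀ : ℝ} (ht₀ : t₀ ∈ I)
    (hu₀ : u t₀ = 0) : EqOn u 0 I := by
  intro s hs
  obtain ⟨a, c, hI_ac, ht₀_ac, hs_ac⟩ := hI.exists_Icc_subset_of_ordConnected hI' ht₀ hs
  exact eqOn_zero_of_hasDerivAt_smul_self_Icc (hg.mono hI_ac)
    (fun t ht => (hu' t (hI_ac ht)).continuousAt.continuousWithinAt)
    (fun t ht => hu' t (hI_ac (Ioo_subset_Icc_self ht))) ht₀_ac hu₀ (Ioo_subset_Icc_self hs_ac)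

end LinearODE

theorem stmt_5_general (lam : ℝ) (I : Set ℝ) (hIopen : IsOpen I) (hIinterval : I.OrdConnected)
    (b b' b'' : ℝ → ℝ)
    (hb : ∀ s ∈ I, HasDerivAt b (b' s) s)
    (hb' : ∀ s ∈ I, HasDerivAt b' (b'' s) s)
    (hpos : ∀ s ∈ I, 0 < b s)
    (hode : ∀ s ∈ I, b s * b'' s - (b' s) ^ 2 + 6 * lam * b' s - 8 * lam ^ 2 = 0)
    (s₀ : ℝ) (hs₀ : s₀ ∈ I) (h4 : b' s₀ = 4 * lam) :
    ∀ s ∈ I, b' s = 4 * lam := by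
  have hlinear : ∀ s ∈ I,
      HasDerivAt (fun t => b' t - 4 * lam) (((b' s - 2 * lam) / b s) • (b' s - 4 * lam)) s := by
    intro s hs
    have hb''_eq : b'' s = (b' s - 2 * lam) / b s * (b' s - 4 * lam) := by
      field_simp [(hpos s hs).ne']
      linear_combination hode s hs
    simpa [hb''_eq, smul_eq_mul] using (hb' s hs).sub_const (4 * lam)
  have hcoeff : ContinuousOn (fun s => (b' s - 2 * lam) / b s) I := by
    have hb_cont : ContinuousOn b I := fun s hs => (hb s hs).continuousAt.continuousWithinAt
    have hb'_cont : ContinuousOn b' I := fun s hs => (hb' s hs).continuousAt.continuousWithinAt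
    exact (hb'_cont.sub continuousOn_const).div hb_cont fun s hs => (hpos s hs).ne'
  intro s hs
  exact sub_eq_zero.mp <| eqOn_zero_of_hasDerivAt_smul_self (u := fun t => b' t - 4 * lam)
    hIopen hIinterval hcoeff hlinear hs₀ (sub_eq_zero.mpr h4) hs

/-- For a positive C² solution of the Schouten soliton ODE on an open
interval, if `b' = 4λ` at one point, then `b' ≡ 4λ` on the whole interval. -/
theorem stmt_5 (lam : ℝ) (I : Set ℝ) (hIopen : IsOpen I) (hIinterval : I.OrdConnected)
    (b b' b'' : ℝ → ℝ)
    (hb : ∀ s ∈ I, HasDerivAt b (b' s) s)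
    (hb' : ∀ s ∈ I, HasDerivAt b' (b'' s) s)
    (hb'' : ContinuousOn b'' I)
    (hpos : ∀ s ∈ I, 0 < b s)
    (hode : ∀ s ∈ I, b s * b'' s - (b' s) ^ 2 + 6 * lam * b' s - 8 * lam ^ 2 = 0)
    (s₀ : ℝ) (hs₀ : s₀ ∈ I) (h4 : b' s₀ = 4 * lam) :
    ∀ s ∈ I, b' s = 4 * lam :=
  stmt_5_general lam I hIopen hIinterval b b' b'' hb hb' hpos hode s₀ hs₀ h4
end

section
/- Let λ ∈ ℝ, let I ⊆ ℝ be an open interval, and let b : I → ℝ be a twice continuously differentiable function with b(s) > 0 for all s ∈ I, satisfying the Schouten soliton ODE b(s)·b''(s) − (b'(s))² + 6λ·b'(s) − 8λ² = 0 on I. If there exists s₀ ∈ I with b''(s₀) = 0, then b' is constant on I, and its constant value is either 2λ or 4λ. -/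
/-!
Put `q = (b' - 2λ)(b' - 4λ)`. The ODE says `q = b b''`, so `q' = (2b' - 6λ) b'' = ((2b' - 6λ) / b) q`:
`q` solves a linear ODE with continuous coefficient and vanishes at `s₀`, hence vanishes on all of
`I` by Grönwall uniqueness. Thus the continuous function `b'` takes values in `{2λ, 4λ}` on the
connected set `I`, so it is constant.
-/

open Set

section LinearODE

variable {E : Type*} [NormedAddCommGroup E] [NormedSpace ℝ E] {f : ℝ → E} {h : ℝ → ℝ} {a c : ℝ}

theorem eq_zero_of_hasDerivAt_eq_smul_of_left_eq_zero
    (hf : ∀ t ∈ Icc a c, HasDerivAt f (h t • f t) t) (hh : ContinuousOn h (Icc a c))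
    (ha : f a = 0) : ∀ t ∈ Icc a c, f t = 0 := by
  obtain ⟨K, hK⟩ := isCompact_Icc.exists_bound_of_continuousOn hh
  refine eq_zero_of_abs_deriv_le_mul_abs_self_of_eq_zero_right (K := K)
    (fun t ht ↦ (hf t ht).continuousAt.continuousWithinAt)
    (fun t ht ↦ (hf t (Ico_subset_Icc_self ht)).hasDerivWithinAt) ha fun t ht ↦ ?_
  rw [norm_smul]
  exact mul_le_mul_of_nonneg_right (hK t (Ico_subset_Icc_self ht)) (norm_nonneg _)

theorem eq_zero_of_hasDerivAt_eq_smul_of_right_eq_zero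
    (hf : ∀ t ∈ Icc a c, HasDerivAt f (h t • f t) t) (hh : ContinuousOn h (Icc a c))
    (hc : f c = 0) : ∀ t ∈ Icc a c, f t = 0 := by
  have hneg : MapsTo Neg.neg (Icc (-c) (-a)) (Icc a c) := fun t ht ↦ by
    simp only [mem_Icc] at ht ⊢; constructor <;> linarith
  have hneg' : MapsTo Neg.neg (Icc a c) (Icc (-c) (-a)) := fun t ht ↦ by
    simp only [mem_Icc] at ht ⊢; constructor <;> linarith
  have hreversed := eq_zero_of_hasDerivAt_eq_smul_of_left_eq_zero (f := fun t ↦ f (-t))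
    (h := fun t ↦ -h (-t)) (a := -c) (c := -a) (fun t ht ↦ ?_)
    ((hh.comp continuousOn_neg hneg).neg) (by simpa using hc)
  · intro t ht
    simpa using hreversed (-t) (hneg' ht)
  · simpa [neg_smul, Function.comp_def] using (hf (-t) (hneg ht)).scomp t (hasDerivAt_neg t)

theorem Set.OrdConnected.eqOn_zero_of_hasDerivAt_eq_smul {I : Set ℝ} (hI : I.OrdConnected)
    (hf : ∀ t ∈ I, HasDerivAt f (h t • f t) t) (hh : ContinuousOn h I) {s₀ : ℝ} (hs₀ : s₀ ∈ I)
    (h0 : f s₀ = 0) : EqOn f 0 I := by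
  intro s hs
  rcases le_total s₀ s with hle | hle
  · have hsub := hI.out hs₀ hs
    exact eq_zero_of_hasDerivAt_eq_smul_of_left_eq_zero (fun t ht ↦ hf t (hsub ht))
      (hh.mono hsub) h0 s ⟨hle, le_rfl⟩
  · have hsub := hI.out hs hs₀
    exact eq_zero_of_hasDerivAt_eq_smul_of_right_eq_zero (fun t ht ↦ hf t (hsub ht))
      (hh.mono hsub) h0 s ⟨le_rfl, hle⟩

end LinearODE

theorem sub_mul_sub_eq_of_schouten {lam x y z : ℝ}
    (h : x * z - y ^ 2 + 6 * lam * y - 8 * lam ^ 2 = 0) : (y - 2 * lam) * (y - 4 * lam) = x * z := by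
  linear_combination -h

theorem hasDerivAt_sub_mul_sub_of_schouten {lam s : ℝ} {b b' b'' : ℝ → ℝ}
    (hb' : HasDerivAt b' (b'' s) s) (hbs : b s ≠ 0)
    (hode : b s * b'' s - b' s ^ 2 + 6 * lam * b' s - 8 * lam ^ 2 = 0) :
    HasDerivAt (fun t ↦ (b' t - 2 * lam) * (b' t - 4 * lam))
      ((2 * b' s - 6 * lam) / b s * ((b' s - 2 * lam) * (b' s - 4 * lam))) s := by
  refine ((hb'.sub_const (2 * lam)).mul (hb'.sub_const (4 * lam))).congr_deriv ?_
  rw [sub_mul_sub_eq_of_schouten hode]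
  field_simp
  ring

theorem stmt_6_general (lam : ℝ) (I : Set ℝ) (hIinterval : I.OrdConnected)
    (b b' b'' : ℝ → ℝ)
    (hb : ∀ s ∈ I, HasDerivAt b (b' s) s)
    (hb' : ∀ s ∈ I, HasDerivAt b' (b'' s) s)
    (hpos : ∀ s ∈ I, 0 < b s)
    (hode : ∀ s ∈ I, b s * b'' s - (b' s) ^ 2 + 6 * lam * b' s - 8 * lam ^ 2 = 0)
    (s₀ : ℝ) (hs₀ : s₀ ∈ I) (h0 : b'' s₀ = 0) :
    (∀ s ∈ I, b' s = 2 * lam) ∨ (∀ s ∈ I, b' s = 4 * lam) := by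
  have hcoeff : ContinuousOn (fun t ↦ (2 * b' t - 6 * lam) / b t) I := fun t ht ↦
    (ContinuousAt.div (((hb' t ht).continuousAt.const_mul 2).sub_const _) (hb t ht).continuousAt
      (hpos t ht).ne').continuousWithinAt
  have hq : EqOn (fun t ↦ (b' t - 2 * lam) * (b' t - 4 * lam)) 0 I :=
    hIinterval.eqOn_zero_of_hasDerivAt_eq_smul
      (fun t ht ↦ hasDerivAt_sub_mul_sub_of_schouten (hb' t ht) (hpos t ht).ne' (hode t ht))
      hcoeff hs₀ (by simp only [sub_mul_sub_eq_of_schouten (hode s₀ hs₀), h0, mul_zero])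
  have hmaps : MapsTo b' I {2 * lam, 4 * lam} := fun t ht ↦ by
    rcases mul_eq_zero.mp (hq ht) with h | h
    · exact .inl (sub_eq_zero.mp h)
    · exact .inr (sub_eq_zero.mp h)
  have hconst : ∀ s ∈ I, b' s = b' s₀ := fun s hs ↦
    hIinterval.isPreconnected.constant_of_mapsTo
      (isDiscrete_iff_discreteTopology.mpr inferInstance)
      (fun t ht ↦ (hb' t ht).continuousAt.continuousWithinAt) hmaps hs hs₀
  rcases hmaps hs₀ with h2 | h4
  · exact .inl fun s hs ↦ (hconst s hs).trans h2
  · exact .inr fun s hs ↦ (hconst s hs).trans h4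

/-- For a positive C² solution of the Schouten soliton ODE on an open
interval, if `b''` vanishes at one point, then `b'` is constant on the interval, with
constant value either `2λ` or `4λ`. -/
theorem stmt_6 (lam : ℝ) (I : Set ℝ) (hIopen : IsOpen I) (hIinterval : I.OrdConnected)
    (b b' b'' : ℝ → ℝ)
    (hb : ∀ s ∈ I, HasDerivAt b (b' s) s)
    (hb' : ∀ s ∈ I, HasDerivAt b' (b'' s) s)
    (hb'' : ContinuousOn b'' I)
    (hpos : ∀ s ∈ I, 0 < b s)
    (hode : ∀ s ∈ I, b s * b'' s - (b' s) ^ 2 + 6 * lam * b' s - 8 * lam ^ 2 = 0)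
    (s₀ : ℝ) (hs₀ : s₀ ∈ I) (h0 : b'' s₀ = 0) :
    (∀ s ∈ I, b' s = 2 * lam) ∨ (∀ s ∈ I, b' s = 4 * lam) :=
  stmt_6_general lam I hIinterval b b' b'' hb hb' hpos hode s₀ hs₀ h0
end

section
/- Let V be a real inner product space of finite dimension n ≥ 2, let A : V → V be a self-adjoint linear operator, and let v ∈ V be a nonzero vector with A v = 0. Then (tr A)² = (n − 1) · tr(A²) if and only if there exists μ ∈ ℝ such that A = μ · P, where P is the orthogonal projection of V onto the orthogonal complement of the span of v; in that case μ = tr A / (n − 1). -/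
/-!
Let `P` be the orthogonal projection onto `K = (ℝ ∙ v)ᗮ` and `m = dim K = n - 1`. Since `A` kills
`Kᗮ = ℝ ∙ v`, we have `A ∘ P = A`, and expanding the square gives, for `μ = tr A / m`,
`m · tr((A - μ P)²) = m · tr(A²) - (tr A)²`. As `A - μ P` is self-adjoint,
`tr((A - μ P)²) = ∑ ‖(A - μ P) eᵢ‖²` over an orthonormal basis, which vanishes only if `A = μ P`.
-/

open Module LinearMap

namespace Submodule

variable {𝕜 E F : Type*} [RCLike 𝕜] [NormedAddCommGroup E] [InnerProductSpace 𝕜 E]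
  [AddCommGroup F] [Module 𝕜 F]

theorem trace_starProjection [FiniteDimensional 𝕜 E] (K : Submodule 𝕜 E) :
    trace 𝕜 E K.starProjection = finrank 𝕜 K :=
  IsProj.trace ⟨K.starProjection_apply_mem, fun _ => K.starProjection_eq_self_iff.mpr⟩

theorem comp_starProjection_of_orthogonal_le_ker (K : Submodule 𝕜 E) [K.HasOrthogonalProjection]
    {A : E →ₗ[𝕜] F} (hA : Kᗮ ≤ ker A) : A ∘ₗ K.starProjection = A := by
  ext w
  have hw := congrArg A (K.starProjection_add_starProjection_orthogonal w)
  rwa [map_add, hA (Kᗮ.starProjection_apply_mem w), add_zero] at hw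

end Submodule

namespace LinearMap

section RCLike

variable {𝕜 E : Type*} [RCLike 𝕜] [NormedAddCommGroup E] [InnerProductSpace 𝕜 E]
  [FiniteDimensional 𝕜 E]

open scoped InnerProductSpace in
theorem IsSymmetric.trace_comp_self_eq_zero_iff {B : E →ₗ[𝕜] E} (hB : B.IsSymmetric) :
    trace 𝕜 E (B ∘ₗ B) = 0 ↔ B = 0 := by
  set b := stdOrthonormalBasis 𝕜 E
  have hsum : trace 𝕜 E (B ∘ₗ B) = ((∑ i, ‖B (b i)‖ ^ 2 : ℝ) : 𝕜) := by
    rw [trace_eq_sum_inner _ b, RCLike.ofReal_sum]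
    refine Finset.sum_congr rfl fun i _ => ?_
    rw [comp_apply, ← hB, inner_self_eq_norm_sq_to_K, RCLike.ofReal_pow]
  rw [hsum, RCLike.ofReal_eq_zero,
    Finset.sum_eq_zero_iff_of_nonneg fun i _ => sq_nonneg _]
  simp only [Finset.mem_univ, forall_const, sq_eq_zero_iff, norm_eq_zero]
  exact ⟨fun h => b.toBasis.ext fun i => by simpa using h i, fun h i => by simp [h]⟩

end RCLike

section Real

variable {E : Type*} [NormedAddCommGroup E] [InnerProductSpace ℝ E] [FiniteDimensional ℝ E]

theorem trace_sub_smul_starProjection_comp_self {A : E →ₗ[ℝ] E} {K : Submodule ℝ E}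
    (hAK : A ∘ₗ K.starProjection = A) (μ : ℝ) :
    trace ℝ E ((A - μ • (K.starProjection : E →ₗ[ℝ] E)) ∘ₗ
        (A - μ • (K.starProjection : E →ₗ[ℝ] E))) =
      trace ℝ E (A ∘ₗ A) - 2 * μ * trace ℝ E A + μ ^ 2 * finrank ℝ K := by
  have hPP : (K.starProjection : E →ₗ[ℝ] E) ∘ₗ (K.starProjection : E →ₗ[ℝ] E) =
      K.starProjection :=
    ContinuousLinearMap.IsIdempotentElem.toLinearMap K.isIdempotentElem_starProjection
  have hPA : trace ℝ E ((K.starProjection : E →ₗ[ℝ] E) ∘ₗ A) = trace ℝ E A := by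
    rw [trace_comp_comm', hAK]
  simp only [sub_comp, comp_sub, smul_comp, comp_smul, hAK, hPP, map_sub, map_smul, hPA,
    K.trace_starProjection, smul_eq_mul]
  ring

theorem IsSymmetric.sq_trace_eq_finrank_mul_trace_comp_self_iff {A : E →ₗ[ℝ] E}
    (hA : A.IsSymmetric) {K : Submodule ℝ E} (hK : finrank ℝ K ≠ 0) (hAK : Kᗮ ≤ ker A) :
    trace ℝ E A ^ 2 = finrank ℝ K * trace ℝ E (A ∘ₗ A) ↔
      A = (trace ℝ E A / finrank ℝ K) • (K.starProjection : E →ₗ[ℝ] E) := by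
  set m : ℝ := (finrank ℝ K : ℝ) with hm_def
  set μ := trace ℝ E A / m with hμ_def
  have hm : m ≠ 0 := Nat.cast_ne_zero.mpr hK
  have hB : (A - μ • (K.starProjection : E →ₗ[ℝ] E)).IsSymmetric :=
    hA.sub (K.starProjection_isSymmetric.smul (conj_trivial μ))
  have hdefect : m * trace ℝ E ((A - μ • (K.starProjection : E →ₗ[ℝ] E)) ∘ₗ
      (A - μ • (K.starProjection : E →ₗ[ℝ] E))) = m * trace ℝ E (A ∘ₗ A) - trace ℝ E A ^ 2 := by
    rw [trace_sub_smul_starProjection_comp_self (K.comp_starProjection_of_orthogonal_le_ker hAK),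
      ← hm_def, hμ_def]
    field_simp
    ring
  rw [← sub_eq_zero (a := A), ← hB.trace_comp_self_eq_zero_iff, ← mul_eq_zero_iff_left hm,
    hdefect, sub_eq_zero, eq_comm]

theorem eq_trace_div_finrank_of_eq_smul_starProjection {A : E →ₗ[ℝ] E} {K : Submodule ℝ E}
    (hK : finrank ℝ K ≠ 0) {μ : ℝ} (h : A = μ • (K.starProjection : E →ₗ[ℝ] E)) :
    μ = trace ℝ E A / finrank ℝ K := by
  rw [h, map_smul, K.trace_starProjection, smul_eq_mul, mul_div_cancel_right₀]
  exact Nat.cast_ne_zero.mpr hK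

end Real

end LinearMap

/-- Equality case of Statement 10: for a self-adjoint endomorphism `A`
with `A v = 0`, `v ≠ 0`, on an `n`-dimensional real inner product space (`n ≥ 2`),
`(tr A)² = (n − 1)·tr(A²)` iff `A = μ·P` for some `μ ∈ ℝ`, where `P` is the orthogonal
projection onto `(span v)ᗮ`; and in that case `μ = tr A / (n − 1)`. -/
theorem stmt_11 (V : Type*) [NormedAddCommGroup V] [InnerProductSpace ℝ V]
    [FiniteDimensional ℝ V] (hn : 2 ≤ Module.finrank ℝ V)
    (A : V →ₗ[ℝ] V) (hA : A.IsSymmetric) (v : V) (hv : v ≠ 0) (hAv : A v = 0) :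
    ((LinearMap.trace ℝ V A) ^ 2
        = ((Module.finrank ℝ V : ℝ) - 1) * LinearMap.trace ℝ V (A ∘ₗ A) ↔
      ∃ μ : ℝ, ∀ w : V, A w = μ • ((Submodule.orthogonalProjectionOnto (ℝ ∙ v)ᗮ w : V))) ∧
    (∀ μ : ℝ, (∀ w : V, A w = μ • ((Submodule.orthogonalProjectionOnto (ℝ ∙ v)ᗮ w : V))) →
      μ = LinearMap.trace ℝ V A / ((Module.finrank ℝ V : ℝ) - 1)) := by
  set K := (ℝ ∙ v)ᗮ
  have hKV : finrank ℝ K + 1 = finrank ℝ V := by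
    rw [← finrank_span_singleton (K := ℝ) hv, add_comm]
    exact Submodule.finrank_add_finrank_orthogonal _
  have hdim : ((finrank ℝ V : ℝ) - 1) = finrank ℝ K := by
    rw [← hKV, Nat.cast_succ, add_sub_cancel_right]
  have hK : finrank ℝ K ≠ 0 := by omega
  have hAK : Kᗮ ≤ ker A := by
    rw [Submodule.orthogonal_orthogonal, Submodule.span_singleton_le_iff_mem]
    exact hAv
  have hform (μ : ℝ) : (∀ w, A w = μ • (K.orthogonalProjectionOnto w : V)) ↔
      A = μ • (K.starProjection : V →ₗ[ℝ] V) := by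
    rw [LinearMap.ext_iff]; rfl
  have hcoeff (μ : ℝ) (h : ∀ w, A w = μ • (K.orthogonalProjectionOnto w : V)) :
      μ = trace ℝ V A / finrank ℝ K :=
    eq_trace_div_finrank_of_eq_smul_starProjection hK ((hform μ).mp h)
  rw [hdim, hA.sq_trace_eq_finrank_mul_trace_comp_self_iff hK hAK]
  exact ⟨⟨fun h => ⟨_, (hform _).mpr h⟩, fun ⟨μ, h⟩ => hcoeff μ h ▸ (hform μ).mp h⟩, hcoeff⟩
end
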